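/- Let f, g : ℝ → ℝ be continuous functions such that f is periodic with minimal (fundamental) period T_f > 0, g is periodic with minimal period T_g > 0, and f and g are both nonconstant. If the sum f + g is periodic with some period T > 0, then the ratio T_f / T_g is a rational number. -/

import Mathlib

/-!
Fix a period `T > 0` of `f + g` and put `d x = f (x + T) - f x`. Then `d` is periodic with
period `Tf`, and, since `d x = g x - g (x + T)`, also with period `Tg`. If `Tf / Tg` were
irrational, the group generated by `Tf` and `Tg` would be dense in `ℝ`; the periods of the
continuous function `d` form a closed group, so `d` would be a constant `c`. Evaluating at a
maximum and at a minimum of the continuous periodic `f` gives `c = 0`, so `T` is a period of `f`,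
hence of `g`. By minimality `T` is a nonzero integer multiple of both `Tf` and `Tg`, which makes
`Tf / Tg` rational after all.
-/

open Set AddSubgroup

namespace Function

section Group

variable {α β : Type*} [AddGroup α]

def periods (f : α → β) : AddSubgroup α where
  carrier := {c | Periodic f c}
  zero_mem' := periodic_with_period_zero f
  add_mem' := Periodic.add_period
  neg_mem' := Periodic.neg

variable [TopologicalSpace α] [ContinuousAdd α] [TopologicalSpace β] [T2Space β] {f : α → β}

theorem isClosed_periods (hf : Continuous f) : IsClosed (periods f : Set α) := by
  change IsClosed {c | ∀ x, f (x + c) = f x}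
  rw [ofPred_forall]
  exact isClosed_iInter fun x => isClosed_eq (hf.comp (continuous_const_add x)) continuous_const

theorem eq_of_dense_periods (hf : Continuous f) (hd : Dense (periods f : Set α)) (x y : α) :
    f x = f y := by
  have hall : ∀ c, Periodic f c := fun c => (isClosed_periods hf).closure_subset (hd c)
  simpa using (hall (-x + y) x).symm

end Group

theorem Periodic.mem_zmultiples_of_minimal {α β : Type*} [AddCommGroup α] [LinearOrder α]
    [IsOrderedAddMonoid α] [Archimedean α] {f : α → β} {T c : α} (hT : 0 < T)
    (hfT : Periodic f T) (hmin : ∀ T', 0 < T' → Periodic f T' → T ≤ T') (hc : Periodic f c) :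
    c ∈ zmultiples T := by
  have hleast : IsLeast {c | c ∈ periods f ∧ 0 < c} T :=
    ⟨⟨hfT, hT⟩, fun T' hT' => hmin T' hT'.2 hT'.1⟩
  rw [zmultiples_eq_closure, ← cyclic_of_min hleast]
  exact hc

theorem periodic_of_sub_eq_const_of_isCompact_range {α : Type*} [Add α] [Nonempty α]
    {f : α → ℝ} {T : α} {c : ℝ} (hf : IsCompact (range f)) (h : ∀ x, f (x + T) - f x = c) :
    Periodic f T := by
  obtain ⟨_, ⟨xmax, rfl⟩, hmax⟩ := hf.exists_isGreatest (range_nonempty f)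
  obtain ⟨_, ⟨xmin, rfl⟩, hmin⟩ := hf.exists_isLeast (range_nonempty f)
  have hc_nonpos : c ≤ 0 := by linarith [h xmax, hmax (mem_range_self (xmax + T))]
  have hc_nonneg : 0 ≤ c := by linarith [h xmin, hmin (mem_range_self (xmin + T))]
  intro x
  linarith [h x]

end Function

open Function

theorem exists_rat_div_eq_of_mem_zmultiples {a b t : ℝ} (ht : t ≠ 0) (ha : t ∈ zmultiples a)
    (hb : t ∈ zmultiples b) : ∃ q : ℚ, a / b = q := by
  obtain ⟨n, rfl⟩ := ha
  obtain ⟨m, hm⟩ := hb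
  simp only [zsmul_eq_mul] at ht hm
  obtain ⟨hn0, ha0⟩ := mul_ne_zero_iff.1 ht
  have hb0 : b ≠ 0 := by rintro rfl; simp_all
  refine ⟨m / n, ?_⟩
  push_cast
  rw [div_eq_div_iff hb0 hn0, mul_comm a, ← hm, mul_comm]

theorem period_ratio_rational_of_sum_periodic_general (f g : ℝ → ℝ)
    (hf : Continuous f)
    (Tf Tg : ℝ) (hTf : 0 < Tf) (hTg : 0 < Tg)
    (hfper : ∀ x, f (x + Tf) = f x)
    (hfmin : ∀ T' : ℝ, 0 < T' → (∀ x, f (x + T') = f x) → Tf ≤ T')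
    (hgper : ∀ x, g (x + Tg) = g x)
    (hgmin : ∀ T' : ℝ, 0 < T' → (∀ x, g (x + T') = g x) → Tg ≤ T')
    (hsum : ∃ T : ℝ, 0 < T ∧ ∀ x, f (x + T) + g (x + T) = f x + g x) :
    ∃ q : ℚ, Tf / Tg = (q : ℝ) := by
  obtain ⟨T, hT, hsum⟩ := hsum
  by_contra hq
  have hdense : Dense (AddSubgroup.closure {Tf, Tg} : Set ℝ) :=
    dense_addSubgroupClosure_pair_iff.2 fun ⟨q, hq'⟩ => hq ⟨q, hq'.symm⟩
  set d : ℝ → ℝ := (fun x => f (x + T)) - f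
  have hd_eq : d = g - fun x => g (x + T) := funext fun x =>
    show f (x + T) - f x = g x - g (x + T) by linarith [hsum x]
  have hdTf : Periodic d Tf := (Periodic.add_const hfper T).sub hfper
  have hdTg : Periodic d Tg := hd_eq ▸ Periodic.sub hgper (Periodic.add_const hgper T)
  have hd_const : ∀ x, d x = d 0 := fun x =>
    eq_of_dense_periods ((hf.comp (continuous_add_const T)).sub hf)
      (hdense.mono ((closure_le _).2 (pair_subset hdTf hdTg))) x 0
  have hfT : Periodic f T := periodic_of_sub_eq_const_of_isCompact_range
    (Periodic.compact_of_continuous hfper hTf.ne' hf) hd_const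
  have hgT : Periodic g T := fun x => by linarith [hsum x, hfT x]
  exact hq (exists_rat_div_eq_of_mem_zmultiples hT.ne'
    (Periodic.mem_zmultiples_of_minimal hTf hfper hfmin hfT)
    (Periodic.mem_zmultiples_of_minimal hTg hgper hgmin hgT))

/-- **Theorem 3.1 (necessity, two continuous components).** If `f` and `g` are
continuous, nonconstant, with minimal positive periods `Tf` and `Tg`
respectively, and `f + g` is periodic with some positive period, then `Tf / Tg`
is rational. -/
theorem period_ratio_rational_of_sum_periodic (f g : ℝ → ℝ)
    (hf : Continuous f) (hg : Continuous g)
    (Tf Tg : ℝ) (hTf : 0 < Tf) (hTg : 0 < Tg)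
    (hfper : ∀ x, f (x + Tf) = f x)
    (hfmin : ∀ T' : ℝ, 0 < T' → (∀ x, f (x + T') = f x) → Tf ≤ T')
    (hgper : ∀ x, g (x + Tg) = g x)
    (hgmin : ∀ T' : ℝ, 0 < T' → (∀ x, g (x + T') = g x) → Tg ≤ T')
    (hfnc : ∃ x y, f x ≠ f y) (hgnc : ∃ x y, g x ≠ g y)
    (hsum : ∃ T : ℝ, 0 < T ∧ ∀ x, f (x + T) + g (x + T) = f x + g x) :
    ∃ q : ℚ, Tf / Tg = (q : ℝ) :=
  period_ratio_rational_of_sum_periodic_general f g hf Tf Tg hTf hTg hfper hfmin hgper hgmin hsum
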